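/- Let n ≥ 2 and ζ = exp(2πi/n). Then Σ_{1≤i<j≤n-1} [1/((1-ζ^i)(1-ζ^j)²) + 1/((1-ζ^i)²(1-ζ^j))] = -(n-1)(n-2)(n-7)/24. -/

import Mathlib

/-!
Write `a k = (1 - ζ ^ k)⁻¹`; the sum is `p₁ p₂ - p₃` for the power sums `pₘ = ∑ₖ a k ^ m`.
Since `ζ ^ (n - k) = (ζ ^ k)⁻¹`, the reflection `k ↦ n - k` sends `a k` to `1 - a k`, which forces
`p₁ = (n - 1) / 2` and determines `p₃` from `p₁, p₂`. Finally `p₂` is read off the second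
logarithmic derivative at `1` of `∏ₖ (X - ζ ^ k) = 1 + X + ⋯ + X ^ (n - 1)`.
-/

open Finset Polynomial

section LogDerivative

variable {K ι : Type*} [Field K]

theorem eval_derivative_prod_X_sub_C (s : Finset ι) (r : ι → K) {x : K}
    (hx : ∀ i ∈ s, x ≠ r i) :
    (derivative (∏ i ∈ s, (X - C (r i)))).eval x =
      (∏ i ∈ s, (X - C (r i))).eval x * ∑ i ∈ s, (x - r i)⁻¹ := by
  classical
  induction s using Finset.induction_on with
  | empty => simp
  | insert a s ha ih =>
    have hxa : x - r a ≠ 0 := sub_ne_zero.mpr (hx a (mem_insert_self a s))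
    rw [prod_insert ha, sum_insert ha, derivative_mul, derivative_X_sub_C,
      one_mul, eval_add, eval_mul, ih fun i hi => hx i (mem_insert_of_mem hi)]
    simp only [eval_mul, eval_sub, eval_X, eval_C]
    field_simp

theorem eval_derivative_derivative_prod_X_sub_C (s : Finset ι) (r : ι → K) {x : K}
    (hx : ∀ i ∈ s, x ≠ r i) :
    (derivative (derivative (∏ i ∈ s, (X - C (r i))))).eval x =
      (∏ i ∈ s, (X - C (r i))).eval x * ((∑ i ∈ s, (x - r i)⁻¹) ^ 2 - ∑ i ∈ s, (x - r i)⁻¹ ^ 2) := by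
  classical
  induction s using Finset.induction_on with
  | empty => simp
  | insert a s ha ih =>
    have hxs : ∀ i ∈ s, x ≠ r i := fun i hi => hx i (mem_insert_of_mem hi)
    have hxa : x - r a ≠ 0 := sub_ne_zero.mpr (hx a (mem_insert_self a s))
    rw [prod_insert ha, sum_insert ha, sum_insert ha, derivative_mul,
      derivative_X_sub_C, one_mul, derivative_add, derivative_mul, derivative_X_sub_C, one_mul,
      eval_add, eval_add, eval_mul, ih hxs, eval_derivative_prod_X_sub_C s r hxs]
    simp only [eval_mul, eval_sub, eval_X, eval_C]
    field_simp
    ring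

end LogDerivative

theorem sum_Icc_sum_Ioc_mul_sq_add_sq_mul {R : Type*} [CommRing R] (a : ℕ → R) (N : ℕ) :
    ∑ i ∈ Icc 1 N, ∑ j ∈ Ioc i N, (a i * a j ^ 2 + a i ^ 2 * a j) =
      (∑ i ∈ Icc 1 N, a i) * ∑ i ∈ Icc 1 N, a i ^ 2 - ∑ i ∈ Icc 1 N, a i ^ 3 := by
  induction N with
  | zero => simp
  | succ N ih =>
    have hinner : ∀ i ∈ Icc 1 N, ∑ j ∈ Ioc i (N + 1), (a i * a j ^ 2 + a i ^ 2 * a j) =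
        ∑ j ∈ Ioc i N, (a i * a j ^ 2 + a i ^ 2 * a j) +
          (a i * a (N + 1) ^ 2 + a i ^ 2 * a (N + 1)) := fun i hi =>
      sum_Ioc_succ_top (mem_Icc.mp hi).2 _
    rw [sum_Icc_succ_top (Nat.le_add_left 1 N), Ioc_self, sum_empty, add_zero,
      sum_congr rfl hinner, sum_add_distrib, ih, sum_add_distrib, ← sum_mul, ← sum_mul]
    simp only [sum_Icc_succ_top (Nat.le_add_left 1 N)]
    ring

theorem eval_one_geom_sum {R : Type*} [CommRing R] (n : ℕ) :
    (∑ i ∈ range n, (X : R[X]) ^ i).eval 1 = n := by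
  simp [eval_finsetSum]

theorem eval_one_derivative_derivative_geom_sum {R : Type*} [CommRing R] (n : ℕ) :
    3 * (derivative (derivative (∑ i ∈ range n, (X : R[X]) ^ i))).eval 1 =
      n * (n - 1) * (n - 2) := by
  induction n with
  | zero => simp
  | succ n ih =>
    rw [sum_range_succ, derivative_add, derivative_add, eval_add, mul_add, ih, derivative_X_pow,
      derivative_C_mul_X_pow]
    simp only [eval_C_mul, eval_pow, eval_X, one_pow, mul_one]
    rcases n with _ | n
    · simp
    · push_cast [Nat.add_sub_cancel]
      ring

theorem sum_Icc_reflect {M : Type*} [AddCommMonoid M] (f : ℕ → M) (n : ℕ) :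
    ∑ k ∈ Icc 1 (n - 1), f (n - k) = ∑ k ∈ Icc 1 (n - 1), f k := by
  refine sum_nbij' (n - ·) (n - ·) ?_ ?_ ?_ ?_ fun _ _ => rfl
  all_goals intro k hk; simp only [mem_Icc] at hk ⊢; omega

theorem cast_card_Icc_one_sub_one {R : Type*} [Ring R] {n : ℕ} (hn : 0 < n) :
    (#(Icc 1 (n - 1)) : R) = n - 1 := by
  rw [Nat.card_Icc, Nat.add_sub_cancel, Nat.cast_sub hn, Nat.cast_one]

namespace IsPrimitiveRoot

variable {K : Type*} [Field K] {n : ℕ} {ζ : K}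

theorem one_sub_pow_ne_zero (hζ : IsPrimitiveRoot ζ n) {k : ℕ} (hk : k ∈ Icc 1 (n - 1)) :
    1 - ζ ^ k ≠ 0 := by
  rw [mem_Icc] at hk
  exact sub_ne_zero.mpr (hζ.pow_ne_one_of_pos_of_lt (by omega) (by omega)).symm

theorem inv_one_sub_pow_sub (hζ : IsPrimitiveRoot ζ n) {k : ℕ} (hk : k ∈ Icc 1 (n - 1)) :
    (1 - ζ ^ (n - k))⁻¹ = 1 - (1 - ζ ^ k)⁻¹ := by
  have hnk : n - k ∈ Icc 1 (n - 1) := by simp only [mem_Icc] at hk ⊢; omega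
  have hprod : ζ ^ (n - k) * ζ ^ k = 1 := by
    rw [← pow_add, Nat.sub_add_cancel (by simp only [mem_Icc] at hk; omega), hζ.pow_eq_one]
  have hk0 := hζ.one_sub_pow_ne_zero hk
  have hnk0 := hζ.one_sub_pow_ne_zero hnk
  field_simp
  linear_combination -hprod

theorem sum_inv_one_sub_pow_reflect {M : Type*} [AddCommMonoid M]
    (hζ : IsPrimitiveRoot ζ n) (g : K → M) :
    ∑ k ∈ Icc 1 (n - 1), g (1 - ζ ^ k)⁻¹ = ∑ k ∈ Icc 1 (n - 1), g (1 - (1 - ζ ^ k)⁻¹) := by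
  rw [← sum_Icc_reflect]
  exact sum_congr rfl fun k hk => by rw [hζ.inv_one_sub_pow_sub hk]

theorem prod_X_sub_C_pow_eq_geom_sum (hζ : IsPrimitiveRoot ζ n) (hn : 0 < n) :
    ∏ k ∈ Icc 1 (n - 1), (X - C (ζ ^ k)) = ∑ i ∈ range n, (X : K[X]) ^ i := by
  have hrange : range n = insert 0 (Icc 1 (n - 1)) := by
    ext k; simp only [mem_range, mem_insert, mem_Icc]; omega
  have hfactor := X_pow_sub_C_eq_prod hζ hn (one_pow n)
  rw [hrange, prod_insert (by simp), C_1, pow_zero, mul_one, ← mul_geom_sum] at hfactor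
  simp only [mul_one] at hfactor
  exact (mul_left_cancel₀ (X_sub_C_ne_zero 1) hfactor).symm

variable [CharZero K]

theorem sum_inv_one_sub_pow (hζ : IsPrimitiveRoot ζ n) (hn : 0 < n) :
    ∑ k ∈ Icc 1 (n - 1), (1 - ζ ^ k)⁻¹ = ((n : K) - 1) / 2 := by
  have h := hζ.sum_inv_one_sub_pow_reflect id
  simp only [id, sum_sub_distrib, sum_const, nsmul_one, cast_card_Icc_one_sub_one hn] at h
  linear_combination h / 2

theorem sum_inv_one_sub_pow_sq (hζ : IsPrimitiveRoot ζ n) (hn : 0 < n) :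
    ∑ k ∈ Icc 1 (n - 1), (1 - ζ ^ k)⁻¹ ^ 2 = ((n : K) - 1) * (5 - n) / 12 := by
  have h := eval_derivative_derivative_prod_X_sub_C (Icc 1 (n - 1)) (ζ ^ ·) (x := 1)
    fun k hk => sub_ne_zero.mp (hζ.one_sub_pow_ne_zero hk)
  rw [hζ.prod_X_sub_C_pow_eq_geom_sum hn, eval_one_geom_sum, hζ.sum_inv_one_sub_pow hn] at h
  have h3 := eval_one_derivative_derivative_geom_sum (R := K) n
  have hn0 : (n : K) ≠ 0 := Nat.cast_ne_zero.mpr hn.ne'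
  refine mul_left_cancel₀ hn0 ?_
  linear_combination h - h3 / 3

theorem sum_inv_one_sub_pow_cube (hζ : IsPrimitiveRoot ζ n) (hn : 0 < n) :
    ∑ k ∈ Icc 1 (n - 1), (1 - ζ ^ k)⁻¹ ^ 3 = ((n : K) - 1) * (3 - n) / 8 := by
  have h := hζ.sum_inv_one_sub_pow_reflect (· ^ 3)
  have hexpand : ∀ k ∈ Icc 1 (n - 1), (1 - (1 - ζ ^ k)⁻¹) ^ 3 =
      1 - 3 * (1 - ζ ^ k)⁻¹ + 3 * (1 - ζ ^ k)⁻¹ ^ 2 - (1 - ζ ^ k)⁻¹ ^ 3 := fun _ _ => by ring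
  rw [sum_congr rfl hexpand, sum_sub_distrib, sum_add_distrib, sum_sub_distrib, ← mul_sum,
    ← mul_sum, sum_const, nsmul_one, cast_card_Icc_one_sub_one hn, hζ.sum_inv_one_sub_pow hn,
    hζ.sum_inv_one_sub_pow_sq hn] at h
  linear_combination h / 2

end IsPrimitiveRoot

theorem qmzv_12_add_21 (n : ℕ) (hn : 2 ≤ n)
    (ζ : ℂ) (hζ : ζ = Complex.exp (2 * Real.pi * Complex.I / n)) :
    ∑ i ∈ Finset.Icc 1 (n - 1), ∑ j ∈ Finset.Ioc i (n - 1),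
        (1 / ((1 - ζ ^ i) * (1 - ζ ^ j) ^ 2) + 1 / ((1 - ζ ^ i) ^ 2 * (1 - ζ ^ j))) =
      -(((n : ℂ) - 1) * ((n : ℂ) - 2) * ((n : ℂ) - 7)) / 24 := by
  have hpos : 0 < n := by omega
  have hprim : IsPrimitiveRoot ζ n := hζ ▸ Complex.isPrimitiveRoot_exp n hpos.ne'
  simp only [one_div, mul_inv, ← inv_pow]
  rw [sum_Icc_sum_Ioc_mul_sq_add_sq_mul (fun k => (1 - ζ ^ k)⁻¹), hprim.sum_inv_one_sub_pow hpos,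
    hprim.sum_inv_one_sub_pow_sq hpos, hprim.sum_inv_one_sub_pow_cube hpos]
  ring
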